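/- Let G be a d-regular graph on n vertices with second largest adjacency eigenvalue λ₂ ≥ 0. Then SDP(G) ≤ λ₂·n, where SDP(G) = max { ⟨X, A − (d/n)J⟩ : X symmetric, X ⪰ 0, X_{ii} ≤ 1 for all i }. -/

import Mathlib

open Finset Matrix

lemma frob_nonneg {m : Type*} [Fintype m] [DecidableEq m] {X N : Matrix m m ℝ}
    (hX : X.PosSemidef) (hN : N.PosSemidef) : 0 ≤ ∑ i, ∑ j, X i j * N i j := by
  obtain ⟨B, rfl⟩ : ∃ B : Matrix m m ℝ, X = Bᴴ * B := by
    open scoped MatrixOrder in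
    exact CStarAlgebra.nonneg_iff_eq_star_mul_self.mp hX.nonneg
  have h : ∑ i, ∑ j, (Bᴴ * B) i j * N i j
      = ∑ k, (fun i => B k i) ⬝ᵥ (N *ᵥ fun i => B k i) := by
    simp only [Matrix.mul_apply, Matrix.conjTranspose_apply, star_trivial, dotProduct,
      Matrix.mulVec, Finset.sum_mul, Finset.mul_sum]
    rw [show (∑ i : m, ∑ j : m, ∑ k : m, B k i * B k j * N i j)
        = ∑ i : m, ∑ k : m, ∑ j : m, B k i * B k j * N i j from
      Finset.sum_congr rfl fun i _ => Finset.sum_comm]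
    rw [Finset.sum_comm]
    exact Finset.sum_congr rfl fun k _ => Finset.sum_congr rfl fun i _ =>
      Finset.sum_congr rfl fun j _ => by ring
  rw [h]
  refine Finset.sum_nonneg fun k _ => ?_
  have := hN.dotProduct_mulVec_nonneg (fun i => B k i)
  simpa using this

set_option maxHeartbeats 2000000 in
/-- Let `G` be a `d`-regular graph on `n` vertices with second largest adjacency
eigenvalue `λ₂ ≥ 0`. Then `SDP(G) ≤ λ₂·n`, where
`SDP(G) = max { ⟨X, A − (d/n)J⟩ : X symmetric, X ⪰ 0, Xᵢᵢ ≤ 1 }`. -/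
theorem stmt18 {n d : ℕ} (hn : 2 ≤ n) (G : SimpleGraph (Fin n)) [DecidableRel G.Adj]
    (hreg : G.IsRegularOfDegree d)
    (v : Fin n → Fin n → ℝ) (lam : Fin n → ℝ)
    (hortho : ∀ i j, v i ⬝ᵥ v j = if i = j then (1 : ℝ) else 0)
    (heig : ∀ i, (G.adjMatrix ℝ) *ᵥ v i = lam i • v i)
    (hsort : ∀ i j : Fin n, i ≤ j → lam j ≤ lam i)
    (hl2 : 0 ≤ lam ⟨1, by omega⟩) :
    sSup {x : ℝ | ∃ X : Matrix (Fin n) (Fin n) ℝ, X.IsSymm ∧ X.PosSemidef ∧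
        (∀ i, X i i ≤ 1) ∧
        x = ∑ i, ∑ j, X i j * ((G.adjMatrix ℝ) i j - (d : ℝ) / n)}
      ≤ lam ⟨1, by omega⟩ * n := by
  set A := G.adjMatrix ℝ with hAdef
  set i0 : Fin n := ⟨0, by omega⟩ with hi0
  set i1 : Fin n := ⟨1, by omega⟩ with hi1
  set l2 := lam i1 with hl2def
  clear_value l2
  have hnpos : (0:ℝ) < n := by positivity
  -- row and column sums of A
  have hrow : ∀ j, ∑ k, A j k = (d:ℝ) := by
    intro j
    have : ∑ k, A j k = ∑ k, A j k * 1 := by simp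
    rw [this]
    have h := SimpleGraph.adjMatrix_mulVec_const_apply_of_regular (α := ℝ) (a := 1) hreg (v := j)
    simp only [Matrix.mulVec, dotProduct, Function.const_apply] at h
    rw [hAdef]; rw [h]; ring
  have hcol : ∀ j, ∑ k, A k j = (d:ℝ) := by
    intro j
    rw [← hrow j]
    exact Finset.sum_congr rfl fun k _ => by
      simp [hAdef, SimpleGraph.adjMatrix_apply, G.adj_comm]
  have hA0 : ∀ j k, (0:ℝ) ≤ A j k := by
    intro j k
    simp only [hAdef, SimpleGraph.adjMatrix_apply]
    split <;> norm_num
  -- eigenvalue upper bound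
  have hld : ∀ i, lam i ≤ (d:ℝ) := by
    intro i
    have hvv : (∑ k, v i k * v i k) = 1 := by simpa [dotProduct] using hortho i i
    have h2 : lam i = ∑ j, (∑ k, A j k * v i k) * v i j := by
      have := congrArg (fun w => w ⬝ᵥ v i) (heig i)
      simp only [dotProduct, Matrix.mulVec, Pi.smul_apply, smul_eq_mul] at this
      rw [show (∑ j, lam i * v i j * v i j) = lam i * ∑ j, v i j * v i j from by
        rw [Finset.mul_sum]; exact Finset.sum_congr rfl fun j _ => by ring, hvv] at this
      simpa [dotProduct] using this.symm
    have h3 : ∑ j, (∑ k, A j k * v i k) * v i j ≤ (d:ℝ) := by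
      have step1 : ∑ j, (∑ k, A j k * v i k) * v i j
          ≤ ∑ j, ∑ k, A j k * ((v i j)^2 + (v i k)^2) / 2 := by
        rw [show (∑ j, (∑ k, A j k * v i k) * v i j)
            = ∑ j, ∑ k, A j k * v i k * v i j from
          Finset.sum_congr rfl fun j _ => by rw [Finset.sum_mul]]
        refine Finset.sum_le_sum fun j _ => Finset.sum_le_sum fun k _ => ?_
        have := hA0 j k
        nlinarith [sq_nonneg (v i j - v i k)]
      have step2 : ∑ j, ∑ k, A j k * ((v i j)^2 + (v i k)^2) / 2 = (d:ℝ) := by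
        have split : ∀ j k, A j k * ((v i j)^2 + (v i k)^2) / 2
            = A j k * (v i j)^2 / 2 + A j k * (v i k)^2 / 2 := fun j k => by ring
        calc ∑ j, ∑ k, A j k * ((v i j)^2 + (v i k)^2) / 2
            = (∑ j, ∑ k, A j k * (v i j)^2 / 2) + ∑ j, ∑ k, A j k * (v i k)^2 / 2 := by
              rw [← Finset.sum_add_distrib]
              exact Finset.sum_congr rfl fun j _ => by
                rw [← Finset.sum_add_distrib]
                exact Finset.sum_congr rfl fun k _ => split j k
          _ = (d:ℝ)/2 + (d:ℝ)/2 := by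
              congr 1
              · calc ∑ j, ∑ k, A j k * (v i j)^2 / 2
                    = ∑ j, (∑ k, A j k) * (v i j)^2 / 2 := by
                      exact Finset.sum_congr rfl fun j _ => by
                        rw [Finset.sum_mul, Finset.sum_div]
                  _ = ∑ j, (d:ℝ) * (v i j)^2 / 2 := by
                      exact Finset.sum_congr rfl fun j _ => by rw [hrow]
                  _ = (d:ℝ)/2 := by
                      rw [show (∑ j, (d:ℝ) * (v i j)^2 / 2)
                          = (d:ℝ)/2 * ∑ j, v i j * v i j from by
                        rw [Finset.mul_sum]
                        exact Finset.sum_congr rfl fun j _ => by ring, hvv, mul_one]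
              · calc ∑ j, ∑ k, A j k * (v i k)^2 / 2
                    = ∑ k, ∑ j, A j k * (v i k)^2 / 2 := Finset.sum_comm
                  _ = ∑ k, (∑ j, A j k) * (v i k)^2 / 2 := by
                      exact Finset.sum_congr rfl fun k _ => by
                        rw [Finset.sum_mul, Finset.sum_div]
                  _ = ∑ k, (d:ℝ) * (v i k)^2 / 2 := by
                      exact Finset.sum_congr rfl fun k _ => by rw [hcol]
                  _ = (d:ℝ)/2 := by
                      rw [show (∑ k, (d:ℝ) * (v i k)^2 / 2)
                          = (d:ℝ)/2 * ∑ k, v i k * v i k from by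
                        rw [Finset.mul_sum]
                        exact Finset.sum_congr rfl fun k _ => by ring, hvv, mul_one]
          _ = (d:ℝ) := by ring
      linarith
    linarith [h2 ▸ h3]
  -- eigenbasis matrix
  set V : Matrix (Fin n) (Fin n) ℝ := Matrix.of v with hVdef
  have hVVT : V * Vᵀ = 1 := by
    ext i j
    have := hortho i j
    simp only [dotProduct] at this
    simp [Matrix.mul_apply, hVdef, Matrix.one_apply, this]
  have hVTV : Vᵀ * V = 1 := mul_eq_one_comm.mp hVVT
  have hkey : ∀ (y w : Fin n → ℝ), y ⬝ᵥ (Vᵀ *ᵥ w) = (V *ᵥ y) ⬝ᵥ w := fun y w => by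
    rw [Matrix.dotProduct_mulVec, Matrix.vecMul_transpose]
  have hD : A * Vᵀ = Vᵀ * Matrix.diagonal lam := by
    ext j i
    rw [Matrix.mul_diagonal]
    have h1 : (A * Vᵀ) j i = (A *ᵥ v i) j := by
      simp [Matrix.mul_apply, Matrix.mulVec, dotProduct, hVdef]
    rw [h1, heig i]
    simp [hVdef, mul_comm]
  -- the ones vector and its coefficients
  have hone : A *ᵥ (fun _ => (1:ℝ)) = fun _ => (d:ℝ) := by
    funext j
    simp only [Matrix.mulVec, dotProduct, mul_one]
    exact hrow j
  set c : Fin n → ℝ := V *ᵥ (fun _ => (1:ℝ)) with hcdef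
  clear_value c
  have hc1 : Vᵀ *ᵥ c = fun _ => (1:ℝ) := by
    rw [hcdef, Matrix.mulVec_mulVec, hVTV, Matrix.one_mulVec]
  have hcc : ∑ i, c i ^ 2 = (n:ℝ) := by
    have h1 : (fun _ => (1:ℝ)) ⬝ᵥ (Vᵀ *ᵥ c) = (V *ᵥ fun _ => (1:ℝ)) ⬝ᵥ c := hkey _ _
    rw [hc1, ← hcdef] at h1
    have h2 : (fun _ : Fin n => (1:ℝ)) ⬝ᵥ (fun _ : Fin n => (1:ℝ)) = (n:ℝ) := by
      simp [dotProduct]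
    rw [h2] at h1
    rw [show (∑ i, c i ^ 2) = c ⬝ᵥ c from by simp [dotProduct, sq], ← h1]
  have hlc : ∀ i, lam i * c i = (d:ℝ) * c i := by
    intro i
    have h1 : lam i * c i = (A *ᵥ v i) ⬝ᵥ (fun _ => (1:ℝ)) := by
      rw [heig i]
      simp only [dotProduct, Pi.smul_apply, smul_eq_mul, mul_one, hcdef,
        Matrix.mulVec, hVdef]
      rw [Finset.mul_sum]
      exact Finset.sum_congr rfl fun k _ => by simp [Matrix.of_apply]
    have h2 : (A *ᵥ v i) ⬝ᵥ (fun _ => (1:ℝ)) = v i ⬝ᵥ (A *ᵥ fun _ => (1:ℝ)) := by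
      rw [Matrix.dotProduct_mulVec, ← Matrix.mulVec_transpose]
      rw [show Aᵀ = A from by rw [hAdef]; simp]
    rw [h1, h2, hone]
    simp only [dotProduct, hcdef, Matrix.mulVec, hVdef, Matrix.of_apply, mul_one]
    rw [Finset.mul_sum]
    exact Finset.sum_congr rfl fun k _ => by ring
  -- the matrix N = l2 • 1 + (d/n) • J - A is positive semidefinite
  set N : Matrix (Fin n) (Fin n) ℝ :=
    l2 • (1 : Matrix (Fin n) (Fin n) ℝ) + ((d:ℝ)/n) • (Matrix.of fun _ _ => (1:ℝ)) - A
    with hNdef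
  clear_value N
  have hNpsd : N.PosSemidef := by
    refine Matrix.PosSemidef.of_dotProduct_mulVec_nonneg ?_ ?_
    · ext i j
      simp only [hNdef, Matrix.conjTranspose_apply, star_trivial, Matrix.sub_apply,
        Matrix.add_apply, Matrix.smul_apply, Matrix.one_apply, Matrix.of_apply,
        smul_eq_mul, hAdef, SimpleGraph.adjMatrix_apply]
      rw [if_congr (G.adj_comm j i) rfl rfl, if_congr (eq_comm (a := j) (b := i)) rfl rfl]
    · intro x
      have hsx : star x = x := funext fun i => star_trivial _
      rw [hsx]
      set a : Fin n → ℝ := V *ᵥ x with hadef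
      clear_value a
      have hxa : Vᵀ *ᵥ a = x := by
        rw [hadef, Matrix.mulVec_mulVec, hVTV, Matrix.one_mulVec]
      have hxx : x ⬝ᵥ x = ∑ i, a i ^ 2 := by
        conv_lhs => rw [← hxa]
        rw [hkey, Matrix.mulVec_mulVec, hVVT, Matrix.one_mulVec]
        simp [dotProduct, sq]
      have hAxvec : A *ᵥ x = Vᵀ *ᵥ (Matrix.diagonal lam *ᵥ a) := by
        conv_lhs => rw [← hxa]
        rw [Matrix.mulVec_mulVec, hD, ← Matrix.mulVec_mulVec]
      have hAx : x ⬝ᵥ (A *ᵥ x) = ∑ i, lam i * a i ^ 2 := by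
        rw [hAxvec, hkey, ← hadef]
        simp only [dotProduct, Matrix.mulVec, Matrix.diagonal, Matrix.of_apply]
        refine Finset.sum_congr rfl fun i _ => ?_
        rw [Finset.sum_eq_single i (fun k _ hk => by simp [hk.symm])
          (fun h => absurd (Finset.mem_univ _) h)]
        simp only [eq_self_iff_true, if_true, sq]
        ring
      have hca : (fun _ : Fin n => (1:ℝ)) ⬝ᵥ x = c ⬝ᵥ a := by
        conv_lhs => rw [← hxa]
        rw [hkey, ← hcdef]
      have hJx : x ⬝ᵥ ((Matrix.of fun _ _ => (1:ℝ)) *ᵥ x) = (c ⬝ᵥ a) ^ 2 := by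
        rw [← hca]
        simp only [dotProduct, Matrix.mulVec, Matrix.of_apply, one_mul, sq]
        rw [← Finset.sum_mul]
      have hNx : x ⬝ᵥ (N *ᵥ x)
          = l2 * (∑ i, a i ^ 2) + ((d:ℝ)/n) * (c ⬝ᵥ a) ^ 2 - ∑ i, lam i * a i ^ 2 := by
        rw [hNdef, Matrix.sub_mulVec, Matrix.add_mulVec, Matrix.smul_mulVec,
          Matrix.smul_mulVec, Matrix.one_mulVec, dotProduct_sub, dotProduct_add,
          dotProduct_smul, dotProduct_smul, hAx, hJx, hxx, smul_eq_mul, smul_eq_mul]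
      rw [hNx]
      rcases le_or_gt (d:ℝ) l2 with hcase | hcase
      · have hls : ∀ i, lam i ≤ l2 := fun i =>
          le_trans (le_trans (hsort i0 i (by simp [hi0, Fin.le_def])) (hld i0)) hcase
        have h1 : ∑ i, lam i * a i ^ 2 ≤ l2 * ∑ i, a i ^ 2 := by
          rw [Finset.mul_sum]
          exact Finset.sum_le_sum fun i _ => by nlinarith [sq_nonneg (a i), hls i]
        have h2 : (0:ℝ) ≤ ((d:ℝ)/n) * (c ⬝ᵥ a) ^ 2 := by positivity
        linarith
      · have hc0 : ∀ i : Fin n, i ≠ i0 → c i = 0 := by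
          intro i hi
          have hi1le : i1 ≤ i := by
            rw [Fin.le_def]
            have : i.val ≠ 0 := fun h => hi (Fin.ext (by simp [hi0, h]))
            simp [hi1]; omega
          have hle : lam i ≤ l2 := by rw [hl2def]; exact hsort i1 i hi1le
          have hlt : lam i < (d:ℝ) := lt_of_le_of_lt hle hcase
          have := hlc i
          by_contra h
          have : lam i = (d:ℝ) := by
            exact mul_right_cancel₀ h this
          linarith
        have hcaeq : c ⬝ᵥ a = c i0 * a i0 := by
          rw [dotProduct]
          rw [Finset.sum_eq_single i0 (fun i _ hi => by rw [hc0 i hi]; ring)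
            (fun h => absurd (Finset.mem_univ _) h)]
        have hc0sq : c i0 ^ 2 = (n:ℝ) := by
          rw [← hcc]
          rw [Finset.sum_eq_single i0 (fun i _ hi => by rw [hc0 i hi]; ring)
            (fun h => absurd (Finset.mem_univ _) h)]
        have hterm : ((d:ℝ)/n) * (c ⬝ᵥ a) ^ 2 = (d:ℝ) * a i0 ^ 2 := by
          rw [hcaeq, mul_pow, hc0sq]
          field_simp
        rw [hterm]
        have hsplit1 : ∑ i, lam i * a i ^ 2
            = lam i0 * a i0 ^ 2 + ∑ i ∈ Finset.univ.erase i0, lam i * a i ^ 2 :=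
          (Finset.add_sum_erase _ _ (Finset.mem_univ _)).symm
        have hsplit2 : ∑ i, a i ^ 2
            = a i0 ^ 2 + ∑ i ∈ Finset.univ.erase i0, a i ^ 2 :=
          (Finset.add_sum_erase _ _ (Finset.mem_univ _)).symm
        have hrest : ∑ i ∈ Finset.univ.erase i0, lam i * a i ^ 2
            ≤ l2 * ∑ i ∈ Finset.univ.erase i0, a i ^ 2 := by
          rw [Finset.mul_sum]
          refine Finset.sum_le_sum fun i hi => ?_
          have hi1le : i1 ≤ i := by
            rw [Fin.le_def]
            have hne := Finset.ne_of_mem_erase hi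
            have : i.val ≠ 0 := fun h => hne (Fin.ext (by simp [hi0, h]))
            simp [hi1]; omega
          have hle : lam i ≤ l2 := by rw [hl2def]; exact hsort i1 i hi1le
          nlinarith [sq_nonneg (a i), hle]
        have hl0 : lam i0 * a i0 ^ 2 ≤ (d:ℝ) * a i0 ^ 2 := by
          nlinarith [sq_nonneg (a i0), hld i0]
        have hrest0 : (0:ℝ) ≤ l2 * a i0 ^ 2 := mul_nonneg hl2 (sq_nonneg _)
        rw [hsplit1, hsplit2]
        linarith
  -- conclude
  apply Real.sSup_le
  · rintro x ⟨X, hsym, hpsd, hdiag, rfl⟩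
    have h0 := frob_nonneg hpsd hNpsd
    have hinner : ∀ i, ∑ j, X i j * N i j
        = l2 * X i i - ∑ j, X i j * (A i j - (d:ℝ)/n) := by
      intro i
      have : ∑ j, X i j * N i j
          = ∑ j, ((if j = i then l2 * X i j else 0) - X i j * (A i j - (d:ℝ)/n)) := by
        refine Finset.sum_congr rfl fun j _ => ?_
        by_cases h : j = i
        · subst h
          simp only [hNdef, Matrix.sub_apply, Matrix.add_apply, Matrix.smul_apply,
            Matrix.one_apply_eq, Matrix.of_apply, smul_eq_mul, eq_self_iff_true, if_true]
          ring
        · simp only [hNdef, Matrix.sub_apply, Matrix.add_apply, Matrix.smul_apply,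
            Matrix.one_apply, Matrix.of_apply, smul_eq_mul, if_neg h,
            if_neg (Ne.symm h)]
          ring
      rw [this, Finset.sum_sub_distrib,
        Finset.sum_ite_eq' Finset.univ i (fun j => l2 * X i j), if_pos (Finset.mem_univ _)]
    have hsum : ∑ i, ∑ j, X i j * N i j
        = l2 * (∑ i, X i i) - ∑ i, ∑ j, X i j * (A i j - (d:ℝ)/n) := by
      rw [Finset.mul_sum, ← Finset.sum_sub_distrib]
      exact Finset.sum_congr rfl fun i _ => hinner i
    rw [hsum] at h0
    have htr : ∑ i, X i i ≤ (n:ℝ) := by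
      calc ∑ i, X i i ≤ ∑ _i : Fin n, (1:ℝ) := Finset.sum_le_sum fun i _ => hdiag i
        _ = (n:ℝ) := by simp
    nlinarith [h0, htr, hl2]
  · exact mul_nonneg hl2 (le_of_lt hnpos)
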